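/- arXiv:2003.05708 — 3 statements merged into one kernel-verified Lean document; each statement's English description precedes it below -/
import Mathlib

section
/- (Deterministic form of Lemma 3.4.) Let N ∈ ℕ, M = 2^{N+1}, and let Λ_N = {(−1,0)} ∪ {(n,k) : 0 ≤ n ≤ N, 0 ≤ k < 2^n}, a set of cardinality M. Define the linear map w : ℝ^{Λ_N} → ℝ^M by w_ℓ(z) = Σ_{(n,k)∈Λ_N} z_{n,k} · Δ^N_ℓ Ψ_{n,k} for ℓ = 0, …, M−1, where Ψ_{−1,0} := Ψ_{−1}. Let F : ℝ^M → ℝ be differentiable and set G = F ∘ w. If z ∈ ℝ^{Λ_N} and c ≥ 0 are such that |∂F/∂w_ℓ (w(z))| ≤ c for all ℓ = 0, …, M−1, then for every 0 ≤ n ≤ N and 0 ≤ k < 2^n, |∂G/∂z_{n,k}(z)| ≤ c · 2^{−n/2 + 1}. -/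
open MeasureTheory

/-- The Haar mother wavelet. -/
noncomputable def haarMother (t : ℝ) : ℝ :=
  if 0 ≤ t ∧ t < 1/2 then 1 else if 1/2 ≤ t ∧ t < 1 then -1 else 0

/-- The Haar function ψ_{n,k}. -/
noncomputable def haarFn (n k : ℕ) (t : ℝ) : ℝ :=
  (2:ℝ) ^ ((n : ℝ)/2) * haarMother ((2:ℝ)^n * t - k)

/-- The antiderivative Ψ_{n,k}(t) = ∫_0^t ψ_{n,k}(s) ds. -/
noncomputable def haarAnti (n k : ℕ) (t : ℝ) : ℝ := ∫ s in (0:ℝ)..t, haarFn n k s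

/-- The function ψ_{-1} = 1_{[0,1]}. -/
noncomputable def haarNeg (t : ℝ) : ℝ := Set.indicator (Set.Icc (0:ℝ) 1) (fun _ => 1) t

/-- The antiderivative Ψ_{-1}(t) = ∫_0^t ψ_{-1}(s) ds. -/
noncomputable def haarNegAnti (t : ℝ) : ℝ := ∫ s in (0:ℝ)..t, haarNeg s

/-- The dyadic grid point t^N_ℓ = ℓ / 2^{N+1}. -/
noncomputable def gridPt (N ℓ : ℕ) : ℝ := (ℓ : ℝ) / 2 ^ (N+1)

/-- The index set Λ_N = {(-1,0)} ∪ {(n,k) : 0 ≤ n ≤ N, 0 ≤ k < 2^n}; `none` encodes the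
index (-1,0). -/
abbrev HaarIdx (N : ℕ) := Option ((n : Fin (N+1)) × Fin (2^(n:ℕ)))

/-- The increment Δ^N_ℓ Ψ_i over the grid cell `[t^N_ℓ, t^N_{ℓ+1}]` for an index `i ∈ Λ_N`. -/
noncomputable def deltaPsi (N : ℕ) (i : HaarIdx N) (ℓ : Fin (2^(N+1))) : ℝ :=
  match i with
  | none => haarNegAnti (gridPt N ((ℓ : ℕ)+1)) - haarNegAnti (gridPt N (ℓ : ℕ))
  | some ⟨n, k⟩ => haarAnti n k (gridPt N ((ℓ : ℕ)+1)) - haarAnti n k (gridPt N (ℓ : ℕ))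

/-- The linear map sending Haar coefficients to the vector of Brownian-path increments:
`w_ℓ(z) = Σ_{(n,k) ∈ Λ_N} z_{n,k} Δ^N_ℓ Ψ_{n,k}`. -/
noncomputable def wMap (N : ℕ) (z : HaarIdx N → ℝ) : Fin (2^(N+1)) → ℝ :=
  fun ℓ => ∑ i : HaarIdx N, z i * deltaPsi N i ℓ

/-! Since `w` is linear, `∂G/∂z_{n,k}(z)` is `DF(w z)` applied to the vector of increments
`(Δ^N_ℓ Ψ_{n,k})_ℓ`, hence at most `c · Σ_ℓ |Δ^N_ℓ Ψ_{n,k}|`. Each increment is the integral of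
`ψ_{n,k}` over a cell of length `2^{-(N+1)}`, so it is at most `2^{n/2} / 2^{N+1}`, and it vanishes
unless the cell meets the support `[k/2^n, (k+1)/2^n)`; at most `2^{N+1-n} + 1 ≤ 2 · 2^{N+1-n}`
cells do. -/

open Finset Matrix

section LinearFunctional

variable {ι κ : Type*} [Fintype ι]

theorem abs_apply_le_mul_sum_abs [DecidableEq ι] (L : (ι → ℝ) →L[ℝ] ℝ) {c : ℝ}
    (hL : ∀ i, |L (Pi.single i 1)| ≤ c) (v : ι → ℝ) :
    |L v| ≤ c * ∑ i, |v i| := by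
  have hv : L v = ∑ i, v i * L (Pi.single i 1) := by
    conv_lhs => rw [← univ_sum_single v]
    simp only [map_sum]
    refine sum_congr rfl fun i _ => ?_
    rw [← smul_eq_mul, ← map_smul, ← Pi.single_smul', smul_eq_mul, mul_one]
  calc |L v| ≤ ∑ i, |v i| * |L (Pi.single i 1)| := by
        rw [hv]; exact (abs_sum_le_sum_abs _ _).trans_eq (by simp only [abs_mul])
    _ ≤ ∑ i, |v i| * c := by gcongr with i; exact hL i
    _ = c * ∑ i, |v i| := by rw [← sum_mul, mul_comm]

theorem fderiv_comp_vecMul_apply_single [DecidableEq ι] [Fintype κ] (M : Matrix ι κ ℝ)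
    {F : (κ → ℝ) → ℝ} {z : ι → ℝ} (hF : DifferentiableAt ℝ F (z ᵥ* M)) (i : ι) :
    fderiv ℝ (fun z' => F (z' ᵥ* M)) z (Pi.single i 1) = fderiv ℝ F (z ᵥ* M) (M i) := by
  let A : (ι → ℝ) →L[ℝ] κ → ℝ := LinearMap.toContinuousLinearMap M.vecMulLinear
  have hG : HasFDerivAt (fun z' => F (z' ᵥ* M)) ((fderiv ℝ F (z ᵥ* M)).comp A) z :=
    hF.hasFDerivAt.comp z A.hasFDerivAt
  rw [hG.fderiv, ContinuousLinearMap.comp_apply]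
  congr 1
  exact Matrix.single_one_vecMul i M

end LinearFunctional

theorem wMap_eq_vecMul (N : ℕ) (z : HaarIdx N → ℝ) :
    wMap N z = z ᵥ* Matrix.of (deltaPsi N) := rfl

section Haar

theorem measurable_haarMother : Measurable haarMother :=
  Measurable.ite measurableSet_Ico measurable_const
    (Measurable.ite measurableSet_Ico measurable_const measurable_const)

theorem abs_haarMother_le (t : ℝ) : |haarMother t| ≤ 1 := by
  unfold haarMother; split_ifs <;> norm_num

theorem support_haarMother_subset : Function.support haarMother ⊆ Set.Ico 0 1 := by
  intro t ht
  rw [Function.mem_support, haarMother] at ht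
  split_ifs at ht with h₁ h₂
  · exact ⟨h₁.1, h₁.2.trans (by norm_num)⟩
  · exact ⟨(by norm_num : (0:ℝ) ≤ 1/2).trans h₂.1, h₂.2⟩
  · exact absurd rfl ht

variable (n k : ℕ)

theorem measurable_haarFn : Measurable (haarFn n k) :=
  (measurable_haarMother.comp (by fun_prop)).const_mul _

theorem abs_haarFn_le (t : ℝ) : |haarFn n k t| ≤ 2 ^ ((n:ℝ)/2) := by
  unfold haarFn
  rw [abs_mul, abs_of_pos (by positivity)]
  exact mul_le_of_le_one_right (by positivity) (abs_haarMother_le _)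

theorem support_haarFn_subset :
    Function.support (haarFn n k) ⊆ Set.Ico ((k:ℝ) / 2^n) ((k + 1) / 2^n) := by
  intro t ht
  have h := support_haarMother_subset (right_ne_zero_of_mul ht)
  have h2n : (0:ℝ) < 2^n := by positivity
  constructor
  · rw [div_le_iff₀ h2n]; linarith [h.1]
  · rw [lt_div_iff₀ h2n]; linarith [h.2]

theorem intervalIntegrable_haarFn (a b : ℝ) : IntervalIntegrable (haarFn n k) volume a b :=
  intervalIntegrable_const.mono_fun' (measurable_haarFn n k).aestronglyMeasurable
    (Filter.Eventually.of_forall (abs_haarFn_le n k))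

theorem haarAnti_sub_haarAnti (a b : ℝ) :
    haarAnti n k b - haarAnti n k a = ∫ s in a..b, haarFn n k s :=
  intervalIntegral.integral_interval_sub_left
    (intervalIntegrable_haarFn n k 0 b) (intervalIntegrable_haarFn n k 0 a)

variable (N : ℕ)

theorem abs_integral_haarFn_gridCell_le (ℓ : ℕ) :
    |∫ s in gridPt N ℓ..gridPt N (ℓ + 1), haarFn n k s| ≤ 2 ^ ((n:ℝ)/2) / 2^(N+1) := by
  have hlen : |gridPt N (ℓ + 1) - gridPt N ℓ| = 1 / 2^(N+1) := by
    unfold gridPt; push_cast; rw [← sub_div, add_sub_cancel_left, abs_of_pos (by positivity)]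
  have := intervalIntegral.norm_integral_le_of_norm_le_const
    (a := gridPt N ℓ) (b := gridPt N (ℓ + 1))
    (fun t _ => (Real.norm_eq_abs _).trans_le (abs_haarFn_le n k t))
  rwa [Real.norm_eq_abs, hlen, mul_one_div] at this

theorem integral_haarFn_gridCell_eq_zero {p ℓ : ℕ} (hp : 2^n * p = 2^(N+1))
    (hℓ : ℓ + 1 < k * p ∨ (k + 1) * p ≤ ℓ) :
    ∫ s in gridPt N ℓ..gridPt N (ℓ + 1), haarFn n k s = 0 := by
  have hp0 : (p:ℝ) ≠ 0 :=
    Nat.cast_ne_zero.mpr (right_ne_zero_of_mul (hp.trans_ne (by positivity)))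
  have hpR : (2:ℝ)^n * p = 2^(N+1) := by exact_mod_cast hp
  have hscale : ∀ j : ℕ, (j:ℝ) / 2^n = (j * p : ℕ) / 2^(N+1) := fun j => by
    rw [← hpR, Nat.cast_mul, mul_div_mul_right _ _ hp0]
  refine intervalIntegral.integral_zero_ae (Filter.Eventually.of_forall fun t ht => ?_)
  rw [Set.uIoc_of_le (by unfold gridPt; gcongr; simp)] at ht
  refine Function.notMem_support.mp fun hs => ?_
  have hs := support_haarFn_subset n k hs
  rw [hscale, show (k:ℝ) + 1 = ((k + 1 : ℕ):ℝ) by push_cast; ring, hscale] at hs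
  unfold gridPt at ht
  have h2N : (0:ℝ) < 2^(N+1) := by positivity
  rcases hℓ with h | h
  · have : ((ℓ + 1 : ℕ) : ℝ) < (k * p : ℕ) := by exact_mod_cast h
    have := div_lt_div_of_pos_right this h2N
    push_cast at this hs ht
    linarith [ht.2, hs.1]
  · have : ((k + 1) * p : ℕ) ≤ (ℓ : ℝ) := by exact_mod_cast h
    have := div_le_div_of_nonneg_right this h2N.le
    linarith [ht.1, hs.2]

theorem sum_abs_integral_haarFn_gridCell_le (hn : n ≤ N + 1) :
    ∑ ℓ ∈ range (2^(N+1)), |∫ s in gridPt N ℓ..gridPt N (ℓ + 1), haarFn n k s| ≤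
      2 ^ (-(n:ℝ)/2 + 1) := by
  set p := 2^(N+1-n)
  have hp : 2^n * p = 2^(N+1) := by rw [← pow_add, Nat.add_sub_cancel' hn]
  have hpR : (2:ℝ)^n * p = 2^(N+1) := by exact_mod_cast hp
  -- the cell with right endpoint `k / 2^n` is kept: the integrand need not vanish there
  set cells := Ico (k * p - 1) ((k + 1) * p)
  have hsupp : ∀ ℓ ∈ range (2^(N+1)),
      |∫ s in gridPt N ℓ..gridPt N (ℓ + 1), haarFn n k s| ≠ 0 → ℓ ∈ cells := by
    intro ℓ _ hℓ
    by_contra h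
    rw [mem_Ico] at h
    exact hℓ (by rw [integral_haarFn_gridCell_eq_zero n k N hp (by omega), abs_zero])
  have hcard : #cells ≤ 2 * p := by
    rw [Nat.card_Ico, add_mul, one_mul]
    have : 1 ≤ p := Nat.one_le_two_pow
    omega
  calc ∑ ℓ ∈ range (2^(N+1)), |∫ s in gridPt N ℓ..gridPt N (ℓ + 1), haarFn n k s|
      = ∑ ℓ ∈ range (2^(N+1)) with ℓ ∈ cells,
          |∫ s in gridPt N ℓ..gridPt N (ℓ + 1), haarFn n k s| := (sum_filter_of_ne hsupp).symm
    _ ≤ ∑ ℓ ∈ cells, |∫ s in gridPt N ℓ..gridPt N (ℓ + 1), haarFn n k s| :=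
        sum_le_sum_of_subset_of_nonneg (fun _ hℓ => (mem_filter.mp hℓ).2)
          (fun _ _ _ => abs_nonneg _)
    _ ≤ #cells • (2 ^ ((n:ℝ)/2) / 2^(N+1)) :=
        sum_le_card_nsmul _ _ _ fun ℓ _ => abs_integral_haarFn_gridCell_le n k N ℓ
    _ ≤ (2 * p : ℕ) * (2 ^ ((n:ℝ)/2) / 2^(N+1)) := by
        rw [nsmul_eq_mul]; gcongr
    _ = 2 ^ (-(n:ℝ)/2 + 1) := by
        have hsq : (2:ℝ)^n = 2^((n:ℝ)/2) * 2^((n:ℝ)/2) := by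
          rw [← Real.rpow_add two_pos, add_halves, Real.rpow_natCast]
        rw [Real.rpow_add two_pos, Real.rpow_one, neg_div, Real.rpow_neg two_pos.le, ← hpR, hsq]
        have hp0 : (p:ℝ) ≠ 0 := by positivity
        push_cast
        field_simp

end Haar

theorem sum_abs_deltaPsi_le (N : ℕ) (n : Fin (N+1)) (k : Fin (2^(n:ℕ))) :
    ∑ ℓ, |deltaPsi N (some ⟨n, k⟩) ℓ| ≤ 2 ^ (-((n:ℕ):ℝ)/2 + 1) := by
  simp only [deltaPsi, haarAnti_sub_haarAnti]
  rw [Fin.sum_univ_eq_sum_range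
    (fun ℓ => |∫ s in gridPt N ℓ..gridPt N (ℓ + 1), haarFn n k s|)]
  exact sum_abs_integral_haarFn_gridCell_le n k N (by omega)

/-- deterministic form of Lemma 3.4: if all first-order partial derivatives
of `F` at `w(z)` are bounded by `c`, then the partial derivative of `G = F ∘ w` with
respect to the coordinate `z_{n,k}` is bounded by `c · 2^{-n/2 + 1}`. -/
theorem abs_fderiv_comp_wMap_le (N : ℕ) (F : (Fin (2^(N+1)) → ℝ) → ℝ)
    (hF : Differentiable ℝ F) (z : HaarIdx N → ℝ) (c : ℝ) (hc : 0 ≤ c)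
    (hbound : ∀ ℓ : Fin (2^(N+1)), |fderiv ℝ F (wMap N z) (Pi.single ℓ 1)| ≤ c)
    (n : Fin (N+1)) (k : Fin (2^(n:ℕ))) :
    |fderiv ℝ (fun z' => F (wMap N z')) z (Pi.single (some ⟨n, k⟩ : HaarIdx N) 1)| ≤
      c * (2:ℝ) ^ (-((n:ℕ) : ℝ)/2 + 1) := by
  simp only [wMap_eq_vecMul] at hbound ⊢
  rw [fderiv_comp_vecMul_apply_single _ (hF _)]
  exact (abs_apply_le_mul_sum_abs _ hbound _).trans
    (mul_le_mul_of_nonneg_left (sum_abs_deltaPsi_le N n k) hc)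
end

section
/- Let b : ℝ → ℝ be differentiable with |b(x)| ≤ B and |b'(x)| ≤ L for all x ∈ ℝ. Define the Euler-scheme maps x_n : ℝ^M → ℝ by x_0(w) = x_0 and x_{n+1}(w) = x_n(w) + b(x_n(w))·w_n for 0 ≤ n < M. Then for every w ∈ ℝ^M and every 0 ≤ ℓ < M, |∂x_M/∂w_ℓ (w)| ≤ B · ∏_{j=ℓ+1}^{M−1}(1 + L|w_j|) ≤ B · exp(L · Σ_{j=0}^{M−1} |w_j|). -/
/-- The Euler scheme for the driftless SDE `dX = b(X) dW` with `M` time steps, viewed as a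
deterministic function of the vector of driving increments `w ∈ ℝ^M`:
`x_0(w) = x0` and `x_{n+1}(w) = x_n(w) + b(x_n(w)) w_n`. -/
noncomputable def eulerX (b : ℝ → ℝ) (x0 : ℝ) (M : ℕ) (w : Fin M → ℝ) : ℕ → ℝ
  | 0 => x0
  | n + 1 => eulerX b x0 M w n +
      b (eulerX b x0 M w n) * (if h : n < M then w ⟨n, h⟩ else 0)

private lemma eulerX_step (b : ℝ → ℝ) (x0 : ℝ) (M : ℕ) (n : ℕ) (hn : n < M) :
    (fun w' : Fin M → ℝ => eulerX b x0 M w' (n + 1)) =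
      fun w' => eulerX b x0 M w' n + b (eulerX b x0 M w' n) * w' ⟨n, hn⟩ := by
  funext w'
  simp [eulerX, hn]

set_option maxHeartbeats 1000000 in
private lemma eulerX_deriv_aux (b : ℝ → ℝ) (hb : Differentiable ℝ b)
    (B L : ℝ) (hB : ∀ x, |b x| ≤ B) (hL : ∀ x, |deriv b x| ≤ L)
    (M : ℕ) (x0 : ℝ) (w : Fin M → ℝ) (ℓ : Fin M) :
    ∀ n, n ≤ M → ∃ D : (Fin M → ℝ) →L[ℝ] ℝ,
      HasFDerivAt (fun w' : Fin M → ℝ => eulerX b x0 M w' n) D w ∧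
      (n ≤ (ℓ : ℕ) → D (Pi.single ℓ 1) = 0) ∧
      ((ℓ : ℕ) < n → |D (Pi.single ℓ 1)| ≤
        B * ∏ j ∈ Finset.univ.filter (fun j : Fin M => ℓ < j ∧ (j : ℕ) < n),
          (1 + L * |w j|)) := by
  have hL0 : 0 ≤ L := le_trans (abs_nonneg _) (hL 0)
  have hB0 : 0 ≤ B := le_trans (abs_nonneg _) (hB 0)
  have key : ∀ y r : ℝ, (fderiv ℝ b y) r = r * deriv b y := by
    intro y r
    rw [← fderiv_apply_one_eq_deriv, ← smul_eq_mul, ← map_smul, smul_eq_mul, mul_one]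
  intro n
  induction n with
  | zero =>
    intro _
    exact ⟨0, hasFDerivAt_const x0 w, fun _ => rfl, fun h => absurd h (Nat.not_lt_zero _)⟩
  | succ n IH =>
    intro hn1
    have hn : n < M := hn1
    obtain ⟨D, hD, h0, hbd⟩ := IH (Nat.le_of_succ_le hn1)
    set y := eulerX b x0 M w n with hy
    set i : Fin M := ⟨n, hn⟩ with hi
    -- derivative of b ∘ (x_n)
    have hcomp : HasFDerivAt (fun w' : Fin M → ℝ => b (eulerX b x0 M w' n))
        ((fderiv ℝ b y).comp D) w := ((hb y).hasFDerivAt).comp w hD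
    have hproj : HasFDerivAt (fun w' : Fin M → ℝ => w' i)
        (ContinuousLinearMap.proj (R := ℝ) (φ := fun _ : Fin M => ℝ) i) w :=
      (ContinuousLinearMap.proj (R := ℝ) (φ := fun _ : Fin M => ℝ) i).hasFDerivAt
    have hmul := hcomp.mul hproj
    have hD' : HasFDerivAt (fun w' : Fin M → ℝ => eulerX b x0 M w' (n + 1))
        (D + (b y • (ContinuousLinearMap.proj i : (Fin M → ℝ) →L[ℝ] ℝ)
          + w i • (fderiv ℝ b y).comp D)) w := by
      rw [eulerX_step b x0 M n hn]
      exact hD.add hmul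
    set D' := D + (b y • (ContinuousLinearMap.proj i : (Fin M → ℝ) →L[ℝ] ℝ)
          + w i • (fderiv ℝ b y).comp D) with hD'def
    have happ : D' (Pi.single ℓ 1) =
        D (Pi.single ℓ 1) + (b y * (Pi.single ℓ 1 : Fin M → ℝ) i
          + w i * (D (Pi.single ℓ 1) * deriv b y)) := by
      simp [hD'def, key, smul_eq_mul]
    refine ⟨D', hD', ?_, ?_⟩
    · -- zero case: n + 1 ≤ ℓ
      intro hle
      have hne : i ≠ ℓ := by
        intro h
        have h2 := congrArg Fin.val h
        simp only [hi] at h2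
        omega
      have hsing : (Pi.single ℓ 1 : Fin M → ℝ) i = 0 := Pi.single_eq_of_ne hne 1
      have hDz : D (Pi.single ℓ 1) = 0 := h0 (by omega)
      rw [happ, hDz, hsing]
      ring
    · -- bound case: ℓ < n + 1
      intro hlt
      rcases Nat.lt_or_ge (ℓ : ℕ) n with hltn | hgen
      · -- inductive step: ℓ < n
        have hne : i ≠ ℓ := by
          intro h
          have h2 := congrArg Fin.val h
          simp only [hi] at h2
          omega
        have hsing : (Pi.single ℓ 1 : Fin M → ℝ) i = 0 := Pi.single_eq_of_ne hne 1
        have hbd' := hbd hltn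
        have hins : Finset.univ.filter (fun j : Fin M => ℓ < j ∧ (j : ℕ) < n + 1)
            = insert i (Finset.univ.filter (fun j : Fin M => ℓ < j ∧ (j : ℕ) < n)) := by
          ext j
          simp only [Finset.mem_filter, Finset.mem_insert, Finset.mem_univ, true_and,
            Fin.lt_def, Fin.ext_iff, hi]
          omega
        have hnotmem : i ∉ Finset.univ.filter (fun j : Fin M => ℓ < j ∧ (j : ℕ) < n) := by
          simp [hi]
        rw [hins, Finset.prod_insert hnotmem]
        have hprod0 : 0 ≤ ∏ j ∈ Finset.univ.filter (fun j : Fin M => ℓ < j ∧ (j : ℕ) < n),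
            (1 + L * |w j|) := by
          apply Finset.prod_nonneg
          intro j _
          nlinarith [abs_nonneg (w j)]
        have habs : |D' (Pi.single ℓ 1)| ≤ |D (Pi.single ℓ 1)| * (1 + L * |w i|) := by
          rw [happ, hsing]
          have h2 : |deriv b y| ≤ L := hL y
          have h3 : |w i| * (|D (Pi.single ℓ 1)| * |deriv b y|)
              ≤ |w i| * (|D (Pi.single ℓ 1)| * L) :=
            mul_le_mul_of_nonneg_left
              (mul_le_mul_of_nonneg_left h2 (abs_nonneg _)) (abs_nonneg _)
          calc |D (Pi.single ℓ 1) + (b y * 0 + w i * (D (Pi.single ℓ 1) * deriv b y))|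
              ≤ |D (Pi.single ℓ 1)| + |b y * 0 + w i * (D (Pi.single ℓ 1) * deriv b y)| :=
                abs_add_le _ _
            _ = |D (Pi.single ℓ 1)| + |w i| * (|D (Pi.single ℓ 1)| * |deriv b y|) := by
                rw [mul_zero, zero_add, abs_mul, abs_mul]
            _ ≤ |D (Pi.single ℓ 1)| + |w i| * (|D (Pi.single ℓ 1)| * L) := by linarith
            _ = |D (Pi.single ℓ 1)| * (1 + L * |w i|) := by ring
        calc |D' (Pi.single ℓ 1)| ≤ |D (Pi.single ℓ 1)| * (1 + L * |w i|) := habs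
          _ ≤ (B * ∏ j ∈ Finset.univ.filter (fun j : Fin M => ℓ < j ∧ (j : ℕ) < n),
                (1 + L * |w j|)) * (1 + L * |w i|) := by
              apply mul_le_mul_of_nonneg_right hbd'
              nlinarith [abs_nonneg (w i)]
          _ = B * ((1 + L * |w i|) * ∏ j ∈ Finset.univ.filter
                (fun j : Fin M => ℓ < j ∧ (j : ℕ) < n), (1 + L * |w j|)) := by ring
      · -- base case: ℓ = n
        have heq : (ℓ : ℕ) = n := by omega
        have hiℓ : i = ℓ := by
          apply Fin.ext
          simp [hi, heq]
        have hsing : (Pi.single ℓ 1 : Fin M → ℝ) i = 1 := by rw [hiℓ]; simp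
        have hDz : D (Pi.single ℓ 1) = 0 := h0 (by omega)
        have hempty : Finset.univ.filter (fun j : Fin M => ℓ < j ∧ (j : ℕ) < n + 1)
            = ∅ := by
          apply Finset.filter_eq_empty_iff.mpr
          intro j _
          rw [Fin.lt_def]
          omega
        rw [hempty, Finset.prod_empty, mul_one, happ, hDz, hsing]
        calc |0 + (b y * 1 + w i * (0 * deriv b y))| = |b y| := by ring_nf
          _ ≤ B := hB y

/-- if `|b| ≤ B` and `|b'| ≤ L` then the partial derivative of the Euler
terminal value with respect to the `ℓ`-th increment satisfies
`|∂x_M/∂w_ℓ (w)| ≤ B ∏_{j=ℓ+1}^{M-1} (1 + L|w_j|) ≤ B exp(L Σ_j |w_j|)`. -/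
theorem abs_fderiv_eulerX_le (b : ℝ → ℝ) (hb : Differentiable ℝ b)
    (B L : ℝ) (hB : ∀ x, |b x| ≤ B) (hL : ∀ x, |deriv b x| ≤ L)
    (M : ℕ) (hM : 1 ≤ M) (x0 : ℝ) (w : Fin M → ℝ) (ℓ : Fin M) :
    |fderiv ℝ (fun w' : Fin M → ℝ => eulerX b x0 M w' M) w (Pi.single ℓ 1)| ≤
        B * ∏ j ∈ Finset.univ.filter (fun j : Fin M => ℓ < j), (1 + L * |w j|) ∧
      B * ∏ j ∈ Finset.univ.filter (fun j : Fin M => ℓ < j), (1 + L * |w j|) ≤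
        B * Real.exp (L * ∑ j, |w j|) := by
  have hL0 : 0 ≤ L := le_trans (abs_nonneg _) (hL 0)
  have hB0 : 0 ≤ B := le_trans (abs_nonneg _) (hB 0)
  obtain ⟨D, hD, _, hbd⟩ := eulerX_deriv_aux b hb B L hB hL M x0 w ℓ M le_rfl
  constructor
  · rw [hD.fderiv]
    have hfilter : Finset.univ.filter (fun j : Fin M => ℓ < j ∧ (j : ℕ) < M)
        = Finset.univ.filter (fun j : Fin M => ℓ < j) := by
      apply Finset.filter_congr
      intro j _
      simp [j.isLt]
    have := hbd ℓ.isLt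
    rwa [hfilter] at this
  · apply mul_le_mul_of_nonneg_left _ hB0
    calc ∏ j ∈ Finset.univ.filter (fun j : Fin M => ℓ < j), (1 + L * |w j|)
        ≤ ∏ j : Fin M, (1 + L * |w j|) := by
          have hsplit := Finset.prod_filter_mul_prod_filter_not Finset.univ
            (fun j : Fin M => ℓ < j) (fun j => 1 + L * |w j|)
          have h1 : (0:ℝ) ≤ ∏ j ∈ Finset.univ.filter (fun j : Fin M => ℓ < j),
              (1 + L * |w j|) := by
            apply Finset.prod_nonneg
            intro j _
            nlinarith [abs_nonneg (w j)]
          have h2 : (1:ℝ) ≤ ∏ j ∈ Finset.univ.filter (fun j : Fin M => ¬ ℓ < j),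
              (1 + L * |w j|) :=
            calc (1:ℝ) = ∏ _j ∈ Finset.univ.filter (fun j : Fin M => ¬ ℓ < j), (1:ℝ) :=
                  Finset.prod_const_one.symm
              _ ≤ ∏ j ∈ Finset.univ.filter (fun j : Fin M => ¬ ℓ < j), (1 + L * |w j|) :=
                  Finset.prod_le_prod (fun j _ => by norm_num)
                    (fun j _ => by nlinarith [abs_nonneg (w j)])
          calc ∏ j ∈ Finset.univ.filter (fun j : Fin M => ℓ < j), (1 + L * |w j|)
              ≤ (∏ j ∈ Finset.univ.filter (fun j : Fin M => ℓ < j), (1 + L * |w j|))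
                * ∏ j ∈ Finset.univ.filter (fun j : Fin M => ¬ ℓ < j), (1 + L * |w j|) :=
                le_mul_of_one_le_right h1 h2
            _ = ∏ j : Fin M, (1 + L * |w j|) := hsplit
      _ ≤ ∏ j : Fin M, Real.exp (L * |w j|) := by
          apply Finset.prod_le_prod
          · intro j _
            nlinarith [abs_nonneg (w j)]
          · intro j _
            have := Real.add_one_le_exp (L * |w j|)
            linarith
      _ = Real.exp (∑ j, L * |w j|) := (Real.exp_sum _ _).symm
      _ = Real.exp (L * ∑ j, |w j|) := by rw [Finset.mul_sum]
end

section
/- (Uniqueness of the discontinuity location for the Euler–GBM scheme.) Let X_0 > 0, a > 0, N ≥ 1, and c_0, …, c_{N−1} ∈ ℝ. Define f(z) = X_0 · ∏_{n=0}^{N−1} (1 + a·z + c_n) and set D = {z ∈ ℝ : 1 + a·z + c_n > 0 for all n = 0, …, N−1}. Then D is a nonempty open interval of the form (z̄, ∞), f is strictly increasing on D, f(z) → +∞ as z → +∞, and f(z) → 0 as z → z̄⁺; consequently, for every K > 0 the equation f(z) = K has exactly one solution in D. -/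
/-!
Each factor `a z + b i` is affine with positive slope, so it is positive exactly to the right of
its root `-b i / a`; the product is therefore positive precisely to the right of the largest root
`z̄`, where it vanishes. On `(z̄, ∞)` it is a product of positive increasing functions, hence
strictly increasing, and it tends to `∞` with each factor. Continuity then gives the limit `0`
at `z̄⁺`, and the intermediate value theorem together with strict monotonicity gives exactly one
solution of `f z = K` for every `K > 0`.
-/

open Filter Set Finset

section ProductOfIncreasingFactors

variable {α ι R : Type*} {s : Finset ι} {f : ι → α → R}

theorem Finset.strictMonoOn_prod [Preorder α] [CommMonoidWithZero R] [PartialOrder R]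
    [ZeroLEOneClass R] [PosMulStrictMono R] [Nontrivial R] {D : Set α} (hs : s.Nonempty)
    (hpos : ∀ i ∈ s, ∀ x ∈ D, 0 < f i x) (hmono : ∀ i ∈ s, StrictMonoOn (f i) D) :
    StrictMonoOn (fun x => ∏ i ∈ s, f i x) D := fun _ hx _ hy hxy =>
  prod_lt_prod_of_nonempty (fun i hi => hpos i hi _ hx) (fun i hi => hmono i hi hx hy hxy) hs

theorem Filter.Tendsto.finset_prod_atTop [CommSemiring R] [PartialOrder R] [IsOrderedRing R]
    {l : Filter α} (hs : s.Nonempty) (h : ∀ i ∈ s, Tendsto (f i) l atTop) :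
    Tendsto (fun x => ∏ i ∈ s, f i x) l atTop := by
  induction hs using Finset.Nonempty.cons_induction with
  | singleton i => simpa using h i (mem_singleton_self i)
  | cons i s _ _ ih =>
    simp only [prod_cons]
    exact (h i (mem_cons_self i s)).atTop_mul_atTop₀ (ih fun j hj => h j (mem_cons_of_mem hj))

end ProductOfIncreasingFactors

theorem StrictMonoOn.existsUnique_eq_of_tendsto_atTop {α δ : Type*}
    [ConditionallyCompleteLinearOrder α] [TopologicalSpace α] [OrderTopology α] [DenselyOrdered α]
    [LinearOrder δ] [TopologicalSpace δ] [OrderClosedTopology δ] {f : α → δ} {x₀ : α}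
    (hcont : ContinuousOn f (Ici x₀)) (hmono : StrictMonoOn f (Ioi x₀))
    (htop : Tendsto f atTop atTop) {K : δ} (hK : f x₀ < K) :
    ∃! x, x ∈ Ioi x₀ ∧ f x = K := by
  obtain ⟨x, hx, rfl⟩ := intermediate_value_Ioi hcont htop hK
  exact ⟨x, ⟨hx, rfl⟩, fun y ⟨hy, hyx⟩ => hmono.injOn hy hx hyx⟩

section AffineFactors

variable {ι : Type*} [Fintype ι] [Nonempty ι] {a : ℝ}

noncomputable def largestAffineRoot (a : ℝ) (b : ι → ℝ) : ℝ :=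
  univ.sup' univ_nonempty fun i => -b i / a

theorem setOf_forall_affine_pos (ha : 0 < a) (b : ι → ℝ) :
    {z : ℝ | ∀ i, 0 < a * z + b i} = Ioi (largestAffineRoot a b) := by
  ext z
  simp only [Set.mem_ofPred_eq, Set.mem_Ioi, largestAffineRoot, sup'_lt_iff, Finset.mem_univ,
    forall_const]
  exact forall_congr' fun i => by rw [div_lt_iff₀ ha]; constructor <;> intro <;> linarith

theorem prod_affine_largestAffineRoot (ha : a ≠ 0) (b : ι → ℝ) :
    ∏ i, (a * largestAffineRoot a b + b i) = 0 := by
  obtain ⟨i, -, hi⟩ := exists_mem_eq_sup' univ_nonempty fun i => -b i / a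
  refine prod_eq_zero (mem_univ i) ?_
  rw [largestAffineRoot, hi]
  field_simp
  ring

end AffineFactors

/-- uniqueness of the discontinuity location for the Euler–GBM scheme:
for `f(z) = X₀ ∏_{n<N} (1 + a z + c_n)` with `X₀, a > 0`, the admissible domain
`D = {z : 1 + a z + c_n > 0 ∀ n}` is a half-line `(z̄, ∞)`, `f` is strictly increasing on
`D`, `f → ∞` at `+∞`, `f → 0` as `z → z̄⁺`, and for every `K > 0` the equation `f(z) = K`
has exactly one solution in `D`. -/
theorem euler_gbm_unique_root (X₀ a : ℝ) (hX : 0 < X₀) (ha : 0 < a)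
    (N : ℕ) (hN : 1 ≤ N) (c : Fin N → ℝ) :
    ∃ zbar : ℝ,
      {z : ℝ | ∀ n : Fin N, 0 < 1 + a * z + c n} = Set.Ioi zbar ∧
      StrictMonoOn (fun z => X₀ * ∏ n, (1 + a * z + c n)) (Set.Ioi zbar) ∧
      Tendsto (fun z => X₀ * ∏ n, (1 + a * z + c n)) atTop atTop ∧
      Tendsto (fun z => X₀ * ∏ n, (1 + a * z + c n)) (nhdsWithin zbar (Set.Ioi zbar)) (nhds 0) ∧
      ∀ K : ℝ, 0 < K →
        ∃! z : ℝ, z ∈ Set.Ioi zbar ∧ X₀ * ∏ n, (1 + a * z + c n) = K := by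
  have : Nonempty (Fin N) := Fin.pos_iff_nonempty.mp hN
  have hfactor (z : ℝ) (n : Fin N) : 1 + a * z + c n = a * z + (1 + c n) := by ring
  simp only [hfactor]
  set b : Fin N → ℝ := fun n => 1 + c n
  set f : ℝ → ℝ := fun z => X₀ * ∏ n, (a * z + b n)
  have hD := setOf_forall_affine_pos ha b
  have hcont : Continuous f := by fun_prop
  have hmono : StrictMonoOn f (Ioi (largestAffineRoot a b)) :=
    (strictMono_mul_left_of_pos hX).comp_strictMonoOn <|
      strictMonoOn_prod univ_nonempty (fun n _ _ hz => hD.ge hz n) fun n _ _ _ _ _ hzw => by gcongr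
  have hroot : f (largestAffineRoot a b) = 0 := by
    simp only [f, prod_affine_largestAffineRoot ha.ne', mul_zero]
  have htop : Tendsto f atTop atTop :=
    (Tendsto.finset_prod_atTop univ_nonempty fun n _ =>
      tendsto_atTop_add_const_right _ _ (tendsto_id.const_mul_atTop ha)).const_mul_atTop hX
  refine ⟨largestAffineRoot a b, hD, hmono, htop, ?_, fun K hK => ?_⟩
  · exact hroot ▸ (hcont.tendsto _).mono_left nhdsWithin_le_nhds
  · exact hmono.existsUnique_eq_of_tendsto_atTop hcont.continuousOn htop (hroot ▸ hK)
end
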